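/- arXiv:2408.02224 — 3 statements merged into one kernel-verified Lean document; each statement's English description precedes it below -/
import Mathlib

section
/- For every α ∈ (0,3) and every r ∈ (0,∞), the function θ2 ↦ φ_{r,α}(θ2) is strictly decreasing on (0,∞). -/
open Set MeasureTheory

/-- The Bessel function of the first kind of order 0, via its power series. -/
noncomputable def J0 (x : ℝ) : ℝ :=
  ∑' k : ℕ, (-1 : ℝ) ^ k / ((Nat.factorial k : ℝ)) ^ 2 * (x / 2) ^ (2 * k)

/-- `φ_{r,α}(θ2)` of the paper. -/
noncomputable def phiRA (r α θ2 : ℝ) : ℝ :=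
  2 / (θ2 ^ (1 - α) * Real.pi) *
    ∫ x in Set.Ioi (0 : ℝ),
      (1 - Real.exp (-x ^ 2)) / x ^ (1 + 2 * α) *
        (J0 (Real.sqrt 2 * r * x / Real.sqrt θ2) - 2 * J0 (r * x / Real.sqrt θ2) + 1)

/-!
Substituting `x = √θ₂ u` gives `φ_{r,α}(θ₂) = (2/π) ∫₀^∞ ((1 - e^{-θ₂u²})/θ₂) G(ru) u^{-1-2α} du`
with `G(y) = J0(√2 y) - 2 J0(y) + 1` (`J0Comb`). From `J0(x) = (2π)⁻¹ ∫₀^{2π} cos(x cos θ) dθ`,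
`G(y)` is the angular mean of `(1 - cos(y cos θ))(1 - cos(y sin θ))`, so `0 ≤ G(y) ≤ min(y⁴/4, 4)`
and `G > 0` on `(0, 2π)`. The factor `(1 - e^{-θ₂u²})/θ₂` is a secant slope of `exp`, hence
strictly decreasing in `θ₂`, and the bounds on `G` make the integral converge for `0 < α < 3`.
-/

open Real
open scoped Nat

namespace MeasureTheory

theorem integral_lt_integral_of_ae_le_of_measure_setOf_lt_ne_zero {X : Type*}
    [MeasurableSpace X] {μ : Measure X} {f g : X → ℝ} (hf : Integrable f μ) (hg : Integrable g μ)
    (hle : f ≤ᵐ[μ] g) (hlt : μ {x | f x < g x} ≠ 0) :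
    ∫ x, f x ∂μ < ∫ x, g x ∂μ := by
  rw [← sub_pos, ← integral_sub hg hf,
    integral_pos_iff_support_of_nonneg_ae (hle.mono fun x => sub_nonneg.2) (hg.sub hf)]
  exact pos_iff_ne_zero.2 (mt (measure_mono_null fun x hx => (sub_pos.2 hx).ne') hlt)

theorem integrableOn_Ioi_of_le_rpow {f : ℝ → ℝ} {p q C₀ C₁ : ℝ} (hf : ContinuousOn f (Ioi 0))
    (hp : -1 < p) (hq : q < -1) (h₀ : ∀ u ∈ Ioc (0 : ℝ) 1, ‖f u‖ ≤ C₀ * u ^ p)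
    (h₁ : ∀ u ∈ Ioi (1 : ℝ), ‖f u‖ ≤ C₁ * u ^ q) : IntegrableOn f (Ioi 0) := by
  rw [← Ioc_union_Ioi_eq_Ioi zero_le_one]
  refine IntegrableOn.union ?_ ?_
  · have hbound : IntegrableOn (fun u : ℝ => C₀ * u ^ p) (Ioc 0 1) :=
      ((intervalIntegrable_iff_integrableOn_Ioc_of_le zero_le_one).1
        (intervalIntegral.intervalIntegrable_rpow' hp)).const_mul C₀
    exact hbound.mono' ((hf.mono Ioc_subset_Ioi_self).aestronglyMeasurable measurableSet_Ioc)
      ((ae_restrict_iff' measurableSet_Ioc).2 (Filter.Eventually.of_forall h₀))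
  · have hbound : IntegrableOn (fun u : ℝ => C₁ * u ^ q) (Ioi 1) :=
      (integrableOn_Ioi_rpow_of_lt hq one_pos).const_mul C₁
    exact hbound.mono'
      ((hf.mono (Ioi_subset_Ioi zero_le_one)).aestronglyMeasurable measurableSet_Ioi)
      ((ae_restrict_iff' measurableSet_Ioi).2 (Filter.Eventually.of_forall h₁))

end MeasureTheory

theorem prod_range_two_mul_add_one_div_two_mul_add_two (k : ℕ) :
    ∏ i ∈ Finset.range k, (2 * (i : ℝ) + 1) / (2 * i + 2) = (2 * k)! / ((k ! : ℝ) ^ 2 * 4 ^ k) := by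
  induction k with
  | zero => simp
  | succ n ih =>
    rw [Finset.prod_range_succ, ih, show 2 * (n + 1) = 2 * n + 1 + 1 by ring, Nat.factorial_succ,
      Nat.factorial_succ, Nat.factorial_succ]
    push_cast
    field_simp
    ring

theorem integral_cos_pow_two_mul_zero_two_pi (k : ℕ) :
    ∫ x in 0..2 * π, cos x ^ (2 * k) = 2 * π * ((2 * k)! / ((k ! : ℝ) ^ 2 * 4 ^ k)) := by
  have hper : Function.Periodic (fun x => cos x ^ (2 * k)) π := fun x => by
    simp only [cos_add_pi, pow_mul, neg_sq]
  have hcont : Continuous fun x => cos x ^ (2 * k) := by fun_prop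
  have hcos_sin : ∫ x in 0..π, cos x ^ (2 * k) = ∫ x in 0..π, sin x ^ (2 * k) := by
    calc ∫ x in 0..π, cos x ^ (2 * k) = ∫ x in π / 2..π / 2 + π, cos x ^ (2 * k) := by
          simpa using hper.intervalIntegral_add_eq 0 (π / 2)
      _ = ∫ x in 0..π, cos (x + π / 2) ^ (2 * k) := by
          rw [intervalIntegral.integral_comp_add_right (fun x => cos x ^ (2 * k)), zero_add,
            add_comm]
      _ = ∫ x in 0..π, sin x ^ (2 * k) := by simp only [cos_add_pi_div_two, pow_mul, neg_sq]
  calc ∫ x in 0..2 * π, cos x ^ (2 * k)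
      = (∫ x in 0..π, cos x ^ (2 * k)) + ∫ x in π..π + π, cos x ^ (2 * k) := by
        rw [intervalIntegral.integral_add_adjacent_intervals (hcont.intervalIntegrable _ _)
          (hcont.intervalIntegrable _ _), two_mul π]
    _ = 2 * ∫ x in 0..π, sin x ^ (2 * k) := by
        rw [hper.intervalIntegral_add_eq π 0, zero_add, hcos_sin]
        ring
    _ = _ := by
        rw [integral_sin_pow_even, prod_range_two_mul_add_one_div_two_mul_add_two]
        ring

theorem integral_cos_mul_cos (x : ℝ) : ∫ θ in 0..2 * π, cos (x * cos θ) = 2 * π * J0 x := by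
  set F : ℕ → ℝ → ℝ := fun k θ => (-1) ^ k * (x * cos θ) ^ (2 * k) / (2 * k)!
  have hF : ∀ k, ∫ θ in 0..2 * π, F k θ
      = 2 * π * ((-1) ^ k / (k ! : ℝ) ^ 2 * (x / 2) ^ (2 * k)) := by
    intro k
    have hfac : ((2 * k)! : ℝ) ≠ 0 := by positivity
    simp only [F, mul_pow, mul_div_right_comm _ (cos _ ^ _), ← mul_assoc]
    rw [intervalIntegral.integral_const_mul, integral_cos_pow_two_mul_zero_two_pi, div_pow,
      pow_mul 2, show (2 : ℝ) ^ 2 = 4 by norm_num]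
    field_simp
  have hbound : ∀ k θ, ‖F k θ‖ ≤ |x| ^ (2 * k) / (2 * k)! := fun k θ => by
    have : |x| * |cos θ| ≤ |x| := mul_le_of_le_one_right (abs_nonneg x) (abs_cos_le_one θ)
    simp only [F, norm_div, norm_mul, norm_pow, norm_neg, norm_one, one_pow, one_mul,
      Real.norm_eq_abs, Nat.abs_cast]
    gcongr
  have hsum : HasSum (fun k => ∫ θ in 0..2 * π, F k θ) (∫ θ in 0..2 * π, cos (x * cos θ)) :=
    intervalIntegral.hasSum_integral_of_dominated_convergence (fun k _ => |x| ^ (2 * k) / (2 * k)!)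
      (fun k => (by fun_prop : Continuous (F k)).aestronglyMeasurable)
      (fun k => Filter.Eventually.of_forall fun θ _ => hbound k θ)
      (Filter.Eventually.of_forall fun _ _ =>
        (summable_pow_div_factorial |x|).comp_injective (mul_right_injective₀ two_ne_zero))
      intervalIntegrable_const
      (Filter.Eventually.of_forall fun θ _ => hasSum_cos (x * cos θ))
  simp_rw [← hsum.tsum_eq, hF, tsum_mul_left, J0]

theorem integral_cos_mul_cos_add (x s : ℝ) :
    ∫ θ in 0..2 * π, cos (x * cos (θ + s)) = 2 * π * J0 x := by
  have hper : Function.Periodic (fun θ => cos (x * cos θ)) (2 * π) := fun θ => by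
    simp only [cos_add_two_pi]
  rw [intervalIntegral.integral_comp_add_right (fun θ => cos (x * cos θ)), zero_add, add_comm,
    hper.intervalIntegral_add_eq s 0, zero_add, integral_cos_mul_cos]

theorem integral_cos_mul_sin (x : ℝ) : ∫ θ in 0..2 * π, cos (x * sin θ) = 2 * π * J0 x := by
  simpa only [← sub_eq_add_neg, cos_sub_pi_div_two] using integral_cos_mul_cos_add x (-(π / 2))

theorem integral_cos_mul_cos_mul_cos_mul_sin (y : ℝ) :
    ∫ θ in 0..2 * π, cos (y * cos θ) * cos (y * sin θ) = 2 * π * J0 (√2 * y) := by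
  have hsqrt : √2 * √2 = 2 := mul_self_sqrt zero_le_two
  have hsum : ∀ θ, √2 * y * cos (θ + -(π / 4)) = y * cos θ + y * sin θ := fun θ => by
    rw [← sub_eq_add_neg, cos_sub, cos_pi_div_four, sin_pi_div_four]
    linear_combination y * (cos θ + sin θ) / 2 * hsqrt
  have hdiff : ∀ θ, √2 * y * cos (θ + π / 4) = y * cos θ - y * sin θ := fun θ => by
    rw [cos_add, cos_pi_div_four, sin_pi_div_four]
    linear_combination y * (cos θ - sin θ) / 2 * hsqrt
  have hprod : ∀ θ, cos (y * cos θ) * cos (y * sin θ)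
      = (cos (√2 * y * cos (θ + -(π / 4))) + cos (√2 * y * cos (θ + π / 4))) / 2 := fun θ => by
    rw [hsum, hdiff, cos_add, cos_sub]
    ring
  simp_rw [hprod]
  rw [intervalIntegral.integral_div, intervalIntegral.integral_add
    (Continuous.intervalIntegrable (by fun_prop) _ _)
    (Continuous.intervalIntegrable (by fun_prop) _ _),
    integral_cos_mul_cos_add, integral_cos_mul_cos_add]
  ring

@[fun_prop]
theorem continuous_J0 : Continuous J0 := by
  have hJ0 : J0 = fun x => (2 * π)⁻¹ * ∫ θ in 0..2 * π, cos (x * cos θ) := funext fun x => by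
    rw [integral_cos_mul_cos]
    field_simp
  rw [hJ0]
  fun_prop

noncomputable def J0Comb (y : ℝ) : ℝ := J0 (√2 * y) - 2 * J0 y + 1

theorem J0Comb_eq_integral (y : ℝ) :
    J0Comb y = (2 * π)⁻¹ * ∫ θ in 0..2 * π, (1 - cos (y * cos θ)) * (1 - cos (y * sin θ)) := by
  have hexpand : ∀ θ, (1 - cos (y * cos θ)) * (1 - cos (y * sin θ))
      = 1 - cos (y * cos θ) - cos (y * sin θ) + cos (y * cos θ) * cos (y * sin θ) :=
    fun θ => by ring
  simp_rw [hexpand]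
  rw [intervalIntegral.integral_add, intervalIntegral.integral_sub, intervalIntegral.integral_sub,
    intervalIntegral.integral_const, integral_cos_mul_cos, integral_cos_mul_sin,
    integral_cos_mul_cos_mul_cos_mul_sin, J0Comb]
  · field_simp
    ring
  all_goals exact Continuous.intervalIntegrable (by fun_prop) _ _

@[fun_prop]
theorem continuous_J0Comb : Continuous J0Comb := by
  unfold J0Comb
  fun_prop

theorem J0Comb_le_of_forall_le {y c : ℝ}
    (h : ∀ θ, (1 - cos (y * cos θ)) * (1 - cos (y * sin θ)) ≤ c) : J0Comb y ≤ c := by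
  rw [J0Comb_eq_integral]
  calc (2 * π)⁻¹ * ∫ θ in 0..2 * π, (1 - cos (y * cos θ)) * (1 - cos (y * sin θ))
      ≤ (2 * π)⁻¹ * ∫ _ in 0..2 * π, c := by
        gcongr
        exact intervalIntegral.integral_mono_on (by positivity)
          (Continuous.intervalIntegrable (by fun_prop) _ _) intervalIntegrable_const fun θ _ => h θ
    _ = c := by
        rw [intervalIntegral.integral_const, smul_eq_mul, sub_zero]
        field_simp

theorem J0Comb_nonneg (y : ℝ) : 0 ≤ J0Comb y := by
  rw [J0Comb_eq_integral]
  exact mul_nonneg (by positivity) (intervalIntegral.integral_nonneg (by positivity)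
    fun θ _ => mul_nonneg (sub_nonneg.2 (cos_le_one _)) (sub_nonneg.2 (cos_le_one _)))

theorem J0Comb_le_pow_four_div_four (y : ℝ) : J0Comb y ≤ y ^ 4 / 4 := by
  refine J0Comb_le_of_forall_le fun θ => ?_
  have hcos := one_sub_sq_div_two_le_cos (x := y * cos θ)
  have hsin := one_sub_sq_div_two_le_cos (x := y * sin θ)
  calc (1 - cos (y * cos θ)) * (1 - cos (y * sin θ))
      ≤ (y * cos θ) ^ 2 / 2 * ((y * sin θ) ^ 2 / 2) :=
        mul_le_mul (by linarith) (by linarith) (sub_nonneg.2 (cos_le_one _)) (by positivity)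
    _ = y ^ 4 / 4 * (cos θ ^ 2 * sin θ ^ 2) := by ring
    _ ≤ y ^ 4 / 4 := mul_le_of_le_one_right (by positivity)
        (mul_le_one₀ (cos_sq_le_one θ) (sq_nonneg _) (sin_sq_le_one θ))

theorem J0Comb_le_four (y : ℝ) : J0Comb y ≤ 4 := by
  refine J0Comb_le_of_forall_le fun θ => ?_
  have hcos := neg_one_le_cos (y * cos θ)
  have hsin := neg_one_le_cos (y * sin θ)
  calc (1 - cos (y * cos θ)) * (1 - cos (y * sin θ)) ≤ 2 * 2 :=
        mul_le_mul (by linarith) (by linarith) (sub_nonneg.2 (cos_le_one _)) zero_le_two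
    _ = 4 := by norm_num

theorem cos_lt_one_of_pos_of_lt_two_pi {t : ℝ} (h0 : 0 < t) (h2π : t < 2 * π) : cos t < 1 :=
  (cos_le_one t).lt_of_ne fun h => h0.ne' ((cos_eq_one_iff_of_lt_of_lt (by linarith) h2π).1 h)

theorem J0Comb_pos {y : ℝ} (h0 : 0 < y) (h2π : y < 2 * π) : 0 < J0Comb y := by
  have hsqrt : √2 / 2 < 1 := by
    rw [div_lt_one two_pos, sqrt_lt' two_pos]
    norm_num
  have harg : 0 < y * (√2 / 2) ∧ y * (√2 / 2) < 2 * π :=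
    ⟨by positivity, (mul_lt_of_lt_one_right h0 hsqrt).trans h2π⟩
  rw [J0Comb_eq_integral]
  refine mul_pos (by positivity) ?_
  simpa using intervalIntegral.integral_lt_integral_of_continuousOn_of_le_of_exists_lt
    (f := 0) (by positivity) continuousOn_const (by fun_prop)
    (fun θ _ => mul_nonneg (sub_nonneg.2 (cos_le_one _)) (sub_nonneg.2 (cos_le_one _)))
    ⟨π / 4, ⟨by positivity, by linarith [pi_pos]⟩, by
      rw [Pi.zero_apply, cos_pi_div_four, sin_pi_div_four]
      exact mul_pos (sub_pos.2 (cos_lt_one_of_pos_of_lt_two_pi harg.1 harg.2))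
        (sub_pos.2 (cos_lt_one_of_pos_of_lt_two_pi harg.1 harg.2))⟩

theorem one_sub_exp_neg_mul_div_lt {a b t : ℝ} (ha : 0 < a) (hab : a < b) (ht : 0 < t) :
    (1 - exp (-(b * t))) / b < (1 - exp (-(a * t))) / a := by
  have hb : 0 < b := ha.trans hab
  have hsecant := strictConvexOn_exp.secant_strict_mono (mem_univ 0) (mem_univ (-(b * t)))
    (mem_univ (-(a * t))) (by nlinarith) (by nlinarith) (by nlinarith)
  rw [exp_zero, sub_zero, sub_zero, div_neg, div_neg, neg_lt_neg_iff, div_lt_div_iff₀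
    (by positivity) (by positivity)] at hsecant
  rw [div_lt_div_iff₀ hb ha]
  nlinarith

theorem one_sub_exp_neg_mul_div_le_self {θ : ℝ} (hθ : 0 < θ) (t : ℝ) :
    (1 - exp (-(θ * t))) / θ ≤ t := by
  rw [div_le_iff₀ hθ]
  linarith [add_one_le_exp (-(θ * t))]

theorem one_sub_exp_neg_mul_div_le_inv {θ : ℝ} (hθ : 0 < θ) (t : ℝ) :
    (1 - exp (-(θ * t))) / θ ≤ θ⁻¹ := by
  rw [← one_div]
  gcongr
  linarith [exp_pos (-(θ * t))]

noncomputable def phiIntegrand (r α θ u : ℝ) : ℝ :=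
  (1 - exp (-(θ * u ^ 2))) / θ * J0Comb (r * u) / u ^ (1 + 2 * α)

theorem phiRA_eq_integral (r α : ℝ) {θ : ℝ} (hθ : 0 < θ) :
    phiRA r α θ = 2 / π * ∫ u in Ioi 0, phiIntegrand r α θ u := by
  set c := √θ with hc_def
  have hc : 0 < c := sqrt_pos.2 hθ
  have hpow : c ^ (1 + 2 * α) * θ ^ (1 - α) = θ * c := by
    rw [hc_def, sqrt_eq_rpow, ← rpow_mul hθ.le, ← rpow_add hθ, ← rpow_one_add' hθ.le (by norm_num)]
    ring_nf
  have hsubst : ∀ u ∈ Ioi (0 : ℝ),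
      (1 - exp (-(c * u) ^ 2)) / (c * u) ^ (1 + 2 * α) *
        (J0 (√2 * r * (c * u) / c) - 2 * J0 (r * (c * u) / c) + 1)
      = θ ^ (1 - α) / c * phiIntegrand r α θ u := fun u hu => by
    have hu : 0 < u := hu
    have hJ : J0 (√2 * r * (c * u) / c) - 2 * J0 (r * (c * u) / c) + 1 = J0Comb (r * u) := by
      simp only [mul_div_assoc, mul_div_cancel_left₀ u hc.ne', J0Comb, mul_assoc]
    rw [hJ, mul_rpow hc.le hu.le, mul_pow, sq_sqrt hθ.le, phiIntegrand]
    generalize J0Comb (r * u) = G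
    field_simp
    linear_combination -(1 - exp (-(θ * u ^ 2))) * G * hpow
  rw [phiRA, ← mul_inv_cancel_left₀ hc.ne' (∫ x in Ioi 0, _), ← smul_eq_mul c⁻¹,
    ← mul_zero c, ← integral_comp_mul_left_Ioi _ 0 hc,
    setIntegral_congr_fun measurableSet_Ioi hsubst, integral_const_mul, mul_zero]
  field_simp

theorem phiIntegrand_nonneg (r α : ℝ) {θ u : ℝ} (hθ : 0 < θ) (hu : 0 ≤ u) :
    0 ≤ phiIntegrand r α θ u :=
  div_nonneg (mul_nonneg (div_nonneg (sub_nonneg.2 (exp_le_one_iff.2 (by nlinarith))) hθ.le)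
    (J0Comb_nonneg _)) (rpow_nonneg hu _)

theorem continuousOn_phiIntegrand (r α θ : ℝ) : ContinuousOn (phiIntegrand r α θ) (Ioi 0) :=
  ContinuousOn.div (by fun_prop) (continuousOn_id.rpow_const fun u hu => Or.inl (ne_of_gt hu))
    fun u hu => (rpow_pos_of_pos hu _).ne'

theorem integrableOn_phiIntegrand {α : ℝ} (hα : 0 < α) (hα3 : α < 3) (r : ℝ) {θ : ℝ}
    (hθ : 0 < θ) : IntegrableOn (phiIntegrand r α θ) (Ioi 0) := by
  refine integrableOn_Ioi_of_le_rpow (p := 5 - 2 * α) (q := -(1 + 2 * α)) (C₀ := r ^ 4 / 4)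
    (C₁ := 4 / θ) (continuousOn_phiIntegrand r α θ) (by linarith) (by linarith) ?_ ?_
  · rintro u ⟨hu, -⟩
    rw [norm_of_nonneg (phiIntegrand_nonneg r α hθ hu.le), phiIntegrand]
    calc (1 - exp (-(θ * u ^ 2))) / θ * J0Comb (r * u) / u ^ (1 + 2 * α)
        ≤ u ^ 2 * ((r * u) ^ 4 / 4) / u ^ (1 + 2 * α) := by
          gcongr
          exacts [J0Comb_nonneg _, one_sub_exp_neg_mul_div_le_self hθ _,
            J0Comb_le_pow_four_div_four _]
      _ = r ^ 4 / 4 * u ^ (5 - 2 * α) := by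
          rw [show 5 - 2 * α = (6 : ℕ) - (1 + 2 * α) by push_cast; ring, rpow_sub hu,
            rpow_natCast]
          ring
  · intro u hu
    have hu : (0 : ℝ) < u := one_pos.trans hu
    rw [norm_of_nonneg (phiIntegrand_nonneg r α hθ hu.le), phiIntegrand, rpow_neg hu.le]
    calc (1 - exp (-(θ * u ^ 2))) / θ * J0Comb (r * u) / u ^ (1 + 2 * α)
        ≤ θ⁻¹ * 4 / u ^ (1 + 2 * α) := by
          gcongr
          exacts [J0Comb_nonneg _, one_sub_exp_neg_mul_div_le_inv hθ _, J0Comb_le_four _]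
      _ = 4 / θ * (u ^ (1 + 2 * α))⁻¹ := by ring

theorem phiIntegrand_le_of_lt (r α : ℝ) {a b u : ℝ} (ha : 0 < a) (hab : a < b) (hu : 0 < u) :
    phiIntegrand r α b u ≤ phiIntegrand r α a u :=
  div_le_div_of_nonneg_right (mul_le_mul_of_nonneg_right
    (one_sub_exp_neg_mul_div_lt ha hab (by positivity)).le (J0Comb_nonneg _)) (rpow_nonneg hu.le _)

theorem phiIntegrand_lt_of_lt (r α : ℝ) {a b u : ℝ} (ha : 0 < a) (hab : a < b) (hu : 0 < u)
    (hG : 0 < J0Comb (r * u)) : phiIntegrand r α b u < phiIntegrand r α a u :=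
  div_lt_div_of_pos_right (mul_lt_mul_of_pos_right
    (one_sub_exp_neg_mul_div_lt ha hab (by positivity)) hG) (rpow_pos_of_pos hu _)

/-- Lemma 4.9 analogue: for every `α ∈ (0,3)` and `r > 0`, the function
`θ2 ↦ φ_{r,α}(θ2)` is strictly decreasing on `(0,∞)`. -/
theorem statement8 (α : ℝ) (hα : 0 < α) (hα3 : α < 3) (r : ℝ) (hr : 0 < r) :
    StrictAntiOn (fun θ2 => phiRA r α θ2) (Set.Ioi (0 : ℝ)) := by
  intro a ha b hb hab
  simp only [phiRA_eq_integral r α ha, phiRA_eq_integral r α hb]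
  refine mul_lt_mul_of_pos_left ?_ (by positivity)
  refine integral_lt_integral_of_ae_le_of_measure_setOf_lt_ne_zero
    (integrableOn_phiIntegrand hα hα3 r hb) (integrableOn_phiIntegrand hα hα3 r ha)
    ((ae_restrict_iff' measurableSet_Ioi).2
      (Filter.Eventually.of_forall fun u hu => phiIntegrand_le_of_lt r α ha hab hu)) ?_
  have hsub : Ioo 0 (2 * π / r) ⊆ {u | phiIntegrand r α b u < phiIntegrand r α a u} ∩ Ioi 0 :=
    fun u ⟨hu, hu'⟩ => ⟨phiIntegrand_lt_of_lt r α ha hab hu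
      (J0Comb_pos (by positivity) (by rwa [lt_div_iff₀' hr] at hu')), hu⟩
  rw [Measure.restrict_apply' measurableSet_Ioi]
  exact (measure_mono hsub).trans_lt' (by simp [hr, pi_pos]) |>.ne'
end

section
/- For every x ≥ 0, J0(√2 x) − 2 J0(x) + 1 = (2/π) ∫_0^{π/2} (1 − cos(x cos t))(1 − cos(x sin t)) dt; in particular, J0(√2 x) − 2 J0(x) + 1 ≥ 0 for all x ≥ 0. -/
open Set MeasureTheory

open Real intervalIntegral in
private lemma sinpow_int (k : ℕ) :
    ∫ t in (0:ℝ)..(π/2), Real.sin t ^ (2*k)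
      = (π/2) * (((2*k).factorial : ℝ) / (4^k * ((k.factorial : ℝ))^2)) := by
  induction k with
  | zero => simp
  | succ k ih =>
    have h2 : 2 * (k+1) = 2*k + 2 := by ring
    rw [h2, integral_sin_pow, ih]
    have hk : ((k.factorial : ℝ)) ≠ 0 := Nat.cast_ne_zero.mpr k.factorial_ne_zero
    have h4 : (4:ℝ)^k ≠ 0 := by positivity
    have hfac : (((2*k+2).factorial : ℝ)) = (2*k+2) * ((2*k+1) * ((2*k).factorial : ℝ)) := by
      have e : 2*k+2 = (2*k+1) + 1 := by ring
      rw [e, Nat.factorial_succ, Nat.factorial_succ]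
      push_cast; ring
    have hfac2 : (((k+1).factorial : ℝ)) = (k+1) * (k.factorial : ℝ) := by
      rw [Nat.factorial_succ]; push_cast; ring
    rw [hfac, hfac2]
    simp only [Real.sin_zero, Real.cos_pi_div_two, mul_zero, zero_mul, zero_pow,
      Nat.succ_ne_zero, ne_eq, Nat.add_eq_zero, and_false, not_false_eq_true, sub_zero, zero_div,
      zero_add]
    push_cast
    have hπ : (0:ℝ) < π := Real.pi_pos
    field_simp
    ring

open Real intervalIntegral in
private lemma J0_integral (y : ℝ) :
    J0 y = (2/π) * ∫ t in (0:ℝ)..(π/2), Real.cos (y * Real.sin t) := by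
  have hπ : (0:ℝ) < π := Real.pi_pos
  set F : ℕ → ℝ → ℝ := fun k t => (-1:ℝ)^k * (y * Real.sin t)^(2*k) / ((2*k).factorial : ℝ)
    with hF
  have hFc : ∀ k, Continuous (F k) := by intro k; fun_prop
  have hvol : (volume (Ioc (0:ℝ) (π/2))).toReal = π/2 := by
    rw [Real.volume_Ioc, sub_zero, ENNReal.toReal_ofReal (by positivity)]
  have hswap : ∫ t in Ioc (0:ℝ) (π/2), (∑' k, F k t)
      = ∑' k, ∫ t in Ioc (0:ℝ) (π/2), F k t := by
    refine (MeasureTheory.integral_tsum_of_summable_integral_norm ?_ ?_).symm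
    · intro k
      exact (hFc k).integrableOn_Ioc
    · have hsum : Summable (fun k : ℕ => (|y|^(2*k) / ((2*k).factorial : ℝ)) * (π/2)) := by
        apply Summable.mul_right
        exact (Real.summable_pow_div_factorial |y|).comp_injective
          (mul_right_injective₀ (two_ne_zero))
      apply Summable.of_nonneg_of_le (fun k => integral_nonneg (fun a => norm_nonneg _)) _ hsum
      intro k
      have hb : ∀ᵐ t ∂(volume.restrict (Ioc (0:ℝ) (π/2))),
          ‖‖F k t‖‖ ≤ |y|^(2*k) / ((2*k).factorial : ℝ) := by
        filter_upwards with t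
        rw [norm_norm]
        have h1 : ‖F k t‖ = |y * Real.sin t|^(2*k) / ((2*k).factorial : ℝ) := by
          simp [hF, abs_div, abs_mul, abs_pow, Nat.abs_cast]
        rw [h1]
        apply div_le_div_of_nonneg_right ?_ (by positivity)
        · apply pow_le_pow_left₀ (abs_nonneg _)
          rw [abs_mul]
          calc |y| * |Real.sin t| ≤ |y| * 1 :=
                mul_le_mul_of_nonneg_left (abs_sin_le_one t) (abs_nonneg _)
            _ = |y| := mul_one _
      calc ∫ t in Ioc (0:ℝ) (π/2), ‖F k t‖
          = ‖∫ t in Ioc (0:ℝ) (π/2), ‖F k t‖‖ :=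
            (Real.norm_of_nonneg (integral_nonneg fun a => norm_nonneg _)).symm
        _ ≤ (|y|^(2*k) / ((2*k).factorial : ℝ)) * (volume (Ioc (0:ℝ) (π/2))).toReal :=
            norm_setIntegral_le_of_norm_le_const_ae (by simp [Real.volume_Ioc]) hb
        _ = (|y|^(2*k) / ((2*k).factorial : ℝ)) * (π/2) := by rw [hvol]
  have hcos : ∀ t : ℝ, Real.cos (y * Real.sin t) = ∑' k, F k t := fun t =>
    (Real.hasSum_cos (y * Real.sin t)).tsum_eq.symm
  have hle : (0:ℝ) ≤ π/2 := by positivity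
  have hIoc : ∫ t in (0:ℝ)..(π/2), Real.cos (y * Real.sin t)
      = ∫ t in Ioc (0:ℝ) (π/2), Real.cos (y * Real.sin t) := by
    rw [intervalIntegral.integral_of_le hle]
  have hFint : ∀ k, ∫ t in Ioc (0:ℝ) (π/2), F k t
      = (-1:ℝ)^k * y^(2*k) / ((2*k).factorial : ℝ) * ∫ t in (0:ℝ)..(π/2), Real.sin t ^ (2*k) := by
    intro k
    rw [intervalIntegral.integral_of_le hle, ← MeasureTheory.integral_const_mul]
    congr 1 with t
    simp only [hF]
    rw [mul_pow]
    ring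
  rw [hIoc]
  simp_rw [hcos]
  rw [hswap]
  rw [J0, ← tsum_mul_left]
  apply tsum_congr
  intro k
  rw [hFint k, sinpow_int k]
  have hk : ((k.factorial : ℝ)) ≠ 0 := Nat.cast_ne_zero.mpr k.factorial_ne_zero
  have h2k : (((2*k).factorial : ℝ)) ≠ 0 := Nat.cast_ne_zero.mpr (2*k).factorial_ne_zero
  have h4 : (4:ℝ)^k ≠ 0 := by positivity
  have hy2 : (y/2)^(2*k) = y^(2*k) / 4^k := by
    rw [div_pow, pow_mul, pow_mul]
    norm_num
  rw [hy2]
  field_simp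

open Real intervalIntegral in
private lemma cos_cos_int (y : ℝ) :
    ∫ t in (0:ℝ)..(π/2), Real.cos (y * Real.cos t)
      = ∫ t in (0:ℝ)..(π/2), Real.cos (y * Real.sin t) := by
  have h := intervalIntegral.integral_comp_sub_left (a := (0:ℝ)) (b := π/2)
    (fun t => Real.cos (y * Real.cos t)) (π/2)
  simp only [sub_zero, sub_self] at h
  rw [← h]
  apply intervalIntegral.integral_congr
  intro t _
  simp [Real.cos_pi_div_two_sub]

open Real intervalIntegral in
private lemma refl_eq (g : ℝ → ℝ) (c a b : ℝ) (hg : ∀ u, g (c - u) = g u) :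
    ∫ u in a..b, g u = ∫ u in (c-b)..(c-a), g u := by
  rw [← intervalIntegral.integral_comp_sub_left g c]
  apply intervalIntegral.integral_congr
  intro t _
  exact (hg t).symm

open Real intervalIntegral in
private lemma prod_int (x : ℝ) :
    ∫ t in (0:ℝ)..(π/2), Real.cos (x * Real.cos t) * Real.cos (x * Real.sin t)
      = ∫ u in (0:ℝ)..(π/2), Real.cos (Real.sqrt 2 * x * Real.sin u) := by
  have hs2 : Real.sqrt 2 * Real.sqrt 2 = 2 := Real.mul_self_sqrt (by norm_num)
  set g : ℝ → ℝ := fun u =>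
    (Real.cos (Real.sqrt 2 * x * Real.cos u) + Real.cos (Real.sqrt 2 * x * Real.sin u)) / 2
    with hg
  have hgc : Continuous g := by fun_prop
  have hpt : ∀ t : ℝ, Real.cos (x * Real.cos t) * Real.cos (x * Real.sin t) = g (t + π/4) := by
    intro t
    have hcos : Real.sqrt 2 * x * Real.cos (t + π/4) = x * Real.cos t - x * Real.sin t := by
      rw [Real.cos_add, Real.cos_pi_div_four, Real.sin_pi_div_four]
      linear_combination (x * (Real.cos t - Real.sin t) / 2) * hs2
    have hsin : Real.sqrt 2 * x * Real.sin (t + π/4) = x * Real.cos t + x * Real.sin t := by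
      rw [Real.sin_add, Real.cos_pi_div_four, Real.sin_pi_div_four]
      linear_combination (x * (Real.sin t + Real.cos t) / 2) * hs2
    rw [hg]
    simp only
    rw [hcos, hsin, Real.cos_sub, Real.cos_add]
    ring
  have h1 : ∫ t in (0:ℝ)..(π/2), Real.cos (x * Real.cos t) * Real.cos (x * Real.sin t)
      = ∫ u in (π/4)..(3*π/4), g u := by
    rw [show ∫ t in (0:ℝ)..(π/2), Real.cos (x * Real.cos t) * Real.cos (x * Real.sin t)
        = ∫ t in (0:ℝ)..(π/2), g (t + π/4) from
      intervalIntegral.integral_congr fun t _ => hpt t]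
    rw [intervalIntegral.integral_comp_add_right g (π/4)]
    norm_num
    ring_nf
  have hsymπ : ∀ u, g (π - u) = g u := by
    intro u
    simp [hg, Real.cos_pi_sub, Real.sin_pi_sub, mul_neg]
  have hsymhalf : ∀ u, g (π/2 - u) = g u := by
    intro u
    simp [hg, Real.cos_pi_div_two_sub, Real.sin_pi_div_two_sub, add_comm]
  have hI1 : ∫ u in (π/2)..(3*π/4), g u = ∫ u in (π/4)..(π/2), g u := by
    have := refl_eq g π (π/4) (π/2) hsymπ
    rw [this]; ring_nf
  have hI2 : ∫ u in (0:ℝ)..(π/4), g u = ∫ u in (π/4)..(π/2), g u := by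
    rw [refl_eq g (π/2) 0 (π/4) hsymhalf]
    norm_num
    ring_nf
  have hIg : ∀ a b : ℝ, IntervalIntegrable g volume a b :=
    fun a b => hgc.intervalIntegrable a b
  have hsplit1 : ∫ u in (π/4)..(3*π/4), g u
      = (∫ u in (π/4)..(π/2), g u) + ∫ u in (π/2)..(3*π/4), g u :=
    (intervalIntegral.integral_add_adjacent_intervals (hIg _ _) (hIg _ _)).symm
  have hsplit2 : ∫ u in (0:ℝ)..(π/2), g u
      = (∫ u in (0:ℝ)..(π/4), g u) + ∫ u in (π/4)..(π/2), g u :=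
    (intervalIntegral.integral_add_adjacent_intervals (hIg _ _) (hIg _ _)).symm
  have h2 : ∫ u in (π/4)..(3*π/4), g u = ∫ u in (0:ℝ)..(π/2), g u := by
    rw [hsplit1, hsplit2, hI1, hI2]
  rw [h1, h2]
  have h3 : ∫ u in (0:ℝ)..(π/2), g u
      = ((∫ u in (0:ℝ)..(π/2), Real.cos (Real.sqrt 2 * x * Real.cos u))
        + ∫ u in (0:ℝ)..(π/2), Real.cos (Real.sqrt 2 * x * Real.sin u)) / 2 := by
    rw [← intervalIntegral.integral_add
      ((by fun_prop : Continuous fun u => Real.cos (Real.sqrt 2 * x * Real.cos u)).intervalIntegrable _ _)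
      ((by fun_prop : Continuous fun u => Real.cos (Real.sqrt 2 * x * Real.sin u)).intervalIntegrable _ _)]
    rw [← intervalIntegral.integral_div]
  rw [h3, cos_cos_int]
  ring

/-- the integral representation
`J0(√2 x) − 2 J0(x) + 1 = (2/π) ∫_0^{π/2} (1 − cos(x cos t))(1 − cos(x sin t)) dt`
for `x ≥ 0`; in particular the left-hand side is nonnegative. -/
theorem statement9 (x : ℝ) (hx : 0 ≤ x) :
    (J0 (Real.sqrt 2 * x) - 2 * J0 x + 1 =
      (2 / Real.pi) * ∫ t in (0:ℝ)..(Real.pi / 2),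
        (1 - Real.cos (x * Real.cos t)) * (1 - Real.cos (x * Real.sin t))) ∧
    0 ≤ J0 (Real.sqrt 2 * x) - 2 * J0 x + 1 := by
  have hπ : (0:ℝ) < Real.pi := Real.pi_pos
  have hle : (0:ℝ) ≤ Real.pi/2 := by positivity
  have key : J0 (Real.sqrt 2 * x) - 2 * J0 x + 1 =
      (2 / Real.pi) * ∫ t in (0:ℝ)..(Real.pi / 2),
        (1 - Real.cos (x * Real.cos t)) * (1 - Real.cos (x * Real.sin t)) := by
    have hexp : ∀ t : ℝ,
        (1 - Real.cos (x * Real.cos t)) * (1 - Real.cos (x * Real.sin t))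
        = 1 - Real.cos (x * Real.cos t) - Real.cos (x * Real.sin t)
          + Real.cos (x * Real.cos t) * Real.cos (x * Real.sin t) := by
      intro t; ring
    rw [intervalIntegral.integral_congr (fun t _ => hexp t)]
    have i1 : IntervalIntegrable (fun t : ℝ => (1:ℝ)) volume 0 (Real.pi/2) :=
      intervalIntegrable_const
    have i2 : IntervalIntegrable (fun t => Real.cos (x * Real.cos t)) volume 0 (Real.pi/2) :=
      (by fun_prop : Continuous fun t => Real.cos (x * Real.cos t)).intervalIntegrable _ _
    have i3 : IntervalIntegrable (fun t => Real.cos (x * Real.sin t)) volume 0 (Real.pi/2) :=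
      (by fun_prop : Continuous fun t => Real.cos (x * Real.sin t)).intervalIntegrable _ _
    have i4 : IntervalIntegrable
        (fun t => Real.cos (x * Real.cos t) * Real.cos (x * Real.sin t)) volume 0 (Real.pi/2) :=
      (by fun_prop : Continuous fun t =>
        Real.cos (x * Real.cos t) * Real.cos (x * Real.sin t)).intervalIntegrable _ _
    rw [intervalIntegral.integral_add ((i1.sub i2).sub i3) i4,
      intervalIntegral.integral_sub (i1.sub i2) i3,
      intervalIntegral.integral_sub i1 i2]
    rw [prod_int x, cos_cos_int x]
    rw [intervalIntegral.integral_const]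
    have e1 : ∫ t in (0:ℝ)..(Real.pi/2), Real.cos (x * Real.sin t) = (Real.pi/2) * J0 x := by
      rw [J0_integral x]; field_simp
    have e2 : ∫ u in (0:ℝ)..(Real.pi/2), Real.cos (Real.sqrt 2 * x * Real.sin u)
        = (Real.pi/2) * J0 (Real.sqrt 2 * x) := by
      rw [J0_integral (Real.sqrt 2 * x)]; field_simp
    rw [e1, e2]
    field_simp
    ring
  refine ⟨key, ?_⟩
  rw [key]
  apply mul_nonneg (by positivity)
  apply intervalIntegral.integral_nonneg hle
  intro t _
  have h1 : Real.cos (x * Real.cos t) ≤ 1 := Real.cos_le_one _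
  have h2 : Real.cos (x * Real.sin t) ≤ 1 := Real.cos_le_one _
  nlinarith
end

section
/- Let α0 ∈ (0,3), q ≥ 0, and let (x0_{l1,l2})_{l1,l2 ≥ 1} be real numbers with ∑_{l1,l2 ≥ 1} λ_{l1,l2}^{1+α0} x0_{l1,l2}² < ∞. Let (Δ_n) satisfy c1/n ≤ Δ_n ≤ c2/n for some constants 0 < c1 ≤ c2. Then S_n(q) := ∑_{l1,l2 ≥ 1} (1 − e^{−λ_{l1,l2} Δ_n})^q x0_{l1,l2}² = O((1/n)^{α0 ∧̃ q}) as n → ∞; that is, S_n(q) = O(n^{−α0}) if α0 < q, O(n^{−α0} log n) if α0 = q, and O(n^{−q}) if α0 > q. -/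
open Set MeasureTheory

/-- Eigenvalues `λ_{l1,l2} = θ2 (π² (l1² + l2²) + Γ)` of the operator `A_θ`. -/
noncomputable def specLam (θ2 Γ : ℝ) (l1 l2 : ℕ+) : ℝ :=
  θ2 * (Real.pi ^ 2 * (((l1 : ℕ) : ℝ) ^ 2 + ((l2 : ℕ) : ℝ) ^ 2) + Γ)

/-- `μ_{l1,l2} = π² (l1² + l2²) + μ0`. -/
noncomputable def specMu (μ0 : ℝ) (l1 l2 : ℕ+) : ℝ :=
  Real.pi ^ 2 * (((l1 : ℕ) : ℝ) ^ 2 + ((l2 : ℕ) : ℝ) ^ 2) + μ0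

set_option maxHeartbeats 800000 in
/-- Lemma 5.1, `S_n` bound: under the initial-condition regularity
`∑ λ_{l1,l2}^{1+α0} x0_{l1,l2}² < ∞` and `Δ_n ≍ 1/n`,
`∑_{l1,l2} (1 − e^{−λ_{l1,l2} Δ_n})^q x0_{l1,l2}² = O(n^{−(α0 ∧̃ q)})`. -/
theorem statement12
    (θ0 θ1 η1 θ2 : ℝ) (hθ2 : 0 < θ2)
    (Γ : ℝ) (hΓ : Γ = -θ0 / θ2 + ((θ1 / θ2) ^ 2 + (η1 / θ2) ^ 2) / 4)
    (hpos : 0 < specLam θ2 Γ 1 1)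
    (α0 q : ℝ) (hα0 : 0 < α0) (hα03 : α0 < 3) (hq : 0 ≤ q)
    (x0 : ℕ+ → ℕ+ → ℝ)
    (hsum : Summable (fun p : ℕ+ × ℕ+ => specLam θ2 Γ p.1 p.2 ^ (1 + α0) * x0 p.1 p.2 ^ 2))
    (Δn : ℕ → ℝ) (c1 c2 : ℝ) (hc1 : 0 < c1) (hc12 : c1 ≤ c2)
    (hΔ : ∀ n : ℕ, 1 ≤ n → c1 / n ≤ Δn n ∧ Δn n ≤ c2 / n) :
    ∃ C > 0, ∃ N : ℕ, ∀ n : ℕ, N ≤ n →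
      (∑' (l1 : ℕ+) (l2 : ℕ+),
          (1 - Real.exp (-(specLam θ2 Γ l1 l2 * Δn n))) ^ q * x0 l1 l2 ^ 2) ≤
        C * (if α0 < q then (n : ℝ) ^ (-α0)
          else if α0 = q then (n : ℝ) ^ (-α0) * Real.log n
          else (n : ℝ) ^ (-q)) := by
  have hpi : (0:ℝ) < Real.pi ^ 2 := by positivity
  have hmono : ∀ l1 l2 : ℕ+, specLam θ2 Γ 1 1 ≤ specLam θ2 Γ l1 l2 := by
    intro l1 l2
    have h1 : (1:ℝ) ≤ ((l1 : ℕ) : ℝ) := by exact_mod_cast l1.one_le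
    have h2 : (1:ℝ) ≤ ((l2 : ℕ) : ℝ) := by exact_mod_cast l2.one_le
    simp only [specLam, PNat.one_coe, Nat.cast_one]
    have ha : (1:ℝ) ≤ ((l1 : ℕ) : ℝ) ^ 2 := by nlinarith
    have hb : (1:ℝ) ≤ ((l2 : ℕ) : ℝ) ^ 2 := by nlinarith
    have hkey : 0 ≤ θ2 * Real.pi ^ 2 * ((((l1 : ℕ) : ℝ) ^ 2 + ((l2 : ℕ) : ℝ) ^ 2) - 2) :=
      mul_nonneg (mul_nonneg hθ2.le hpi.le) (by linarith)
    nlinarith [hkey]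
  have hLpos : ∀ l1 l2 : ℕ+, 0 < specLam θ2 Γ l1 l2 :=
    fun l1 l2 => lt_of_lt_of_le hpos (hmono l1 l2)
  set s : ℝ := min α0 q with hsdef
  have hs0 : 0 ≤ s := le_min hα0.le hq
  have hsq : s ≤ q := min_le_right _ _
  have hsα : s ≤ α0 := min_le_left _ _
  set T : ℝ := ∑' p : ℕ+ × ℕ+, specLam θ2 Γ p.1 p.2 ^ (1 + α0) * x0 p.1 p.2 ^ 2 with hTdef
  have hT0 : 0 ≤ T :=
    tsum_nonneg fun p => mul_nonneg (Real.rpow_nonneg (hLpos p.1 p.2).le _) (sq_nonneg _)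
  set K : ℝ := specLam θ2 Γ 1 1 ^ (s - (1 + α0)) with hKdef
  have hK0 : 0 ≤ K := Real.rpow_nonneg hpos.le _
  refine ⟨max 1 (c2 ^ s * (K * T)), lt_of_lt_of_le one_pos (le_max_left _ _), 3, ?_⟩
  intro n hn
  have hn1 : 1 ≤ n := le_trans (by norm_num) hn
  have hn0 : (0:ℝ) < (n : ℝ) := by exact_mod_cast hn1
  have hn3 : (3:ℝ) ≤ (n : ℝ) := by exact_mod_cast hn
  obtain ⟨hΔ1, hΔ2⟩ := hΔ n hn1
  have hΔpos : 0 < Δn n := lt_of_lt_of_le (by positivity) hΔ1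
  -- pointwise bound
  have key : ∀ l1 l2 : ℕ+,
      (1 - Real.exp (-(specLam θ2 Γ l1 l2 * Δn n))) ^ q * x0 l1 l2 ^ 2 ≤
        (K * Δn n ^ s) * (specLam θ2 Γ l1 l2 ^ (1 + α0) * x0 l1 l2 ^ 2) := by
    intro l1 l2
    set L : ℝ := specLam θ2 Γ l1 l2 with hLdef
    have hL : 0 < L := hLpos l1 l2
    have hx : 0 < L * Δn n := mul_pos hL hΔpos
    have hexp1 : Real.exp (-(L * Δn n)) ≤ 1 := by
      calc Real.exp (-(L * Δn n)) ≤ Real.exp 0 := Real.exp_le_exp.mpr (by linarith)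
        _ = 1 := Real.exp_zero
    have hb0 : 0 ≤ 1 - Real.exp (-(L * Δn n)) := by linarith
    have hble : 1 - Real.exp (-(L * Δn n)) ≤ min 1 (L * Δn n) := by
      refine le_min (by linarith [Real.exp_pos (-(L * Δn n))]) ?_
      linarith [Real.add_one_le_exp (-(L * Δn n))]
    have h1 : (1 - Real.exp (-(L * Δn n))) ^ q ≤ min 1 (L * Δn n) ^ q :=
      Real.rpow_le_rpow hb0 hble hq
    have h2 : min 1 (L * Δn n) ^ q ≤ (L * Δn n) ^ s := by
      rcases le_total (L * Δn n) 1 with h | h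
      · rw [min_eq_right h]
        exact Real.rpow_le_rpow_of_exponent_ge hx h hsq
      · rw [min_eq_left h, Real.one_rpow]
        exact Real.one_le_rpow h hs0
    have h3 : (L * Δn n) ^ s = L ^ s * Δn n ^ s := Real.mul_rpow hL.le hΔpos.le
    have h4 : L ^ s ≤ K * L ^ (1 + α0) := by
      have e1 : L ^ s = L ^ (s - (1 + α0)) * L ^ (1 + α0) := by
        rw [← Real.rpow_add hL]; ring_nf
      have e2 : L ^ (s - (1 + α0)) ≤ K :=
        Real.rpow_le_rpow_of_nonpos hpos (hmono l1 l2) (by linarith)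
      rw [e1]
      exact mul_le_mul_of_nonneg_right e2 (Real.rpow_nonneg hL.le _)
    calc (1 - Real.exp (-(L * Δn n))) ^ q * x0 l1 l2 ^ 2
        ≤ (L * Δn n) ^ s * x0 l1 l2 ^ 2 :=
          mul_le_mul_of_nonneg_right (h1.trans h2) (sq_nonneg _)
      _ = (L ^ s * Δn n ^ s) * x0 l1 l2 ^ 2 := by rw [h3]
      _ ≤ ((K * L ^ (1 + α0)) * Δn n ^ s) * x0 l1 l2 ^ 2 := by
          have := mul_le_mul_of_nonneg_right
            (mul_le_mul_of_nonneg_right h4 (Real.rpow_nonneg hΔpos.le s)) (sq_nonneg (x0 l1 l2))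
          linarith
      _ = (K * Δn n ^ s) * (L ^ (1 + α0) * x0 l1 l2 ^ 2) := by ring
  have hgnonneg : ∀ p : ℕ+ × ℕ+,
      0 ≤ (1 - Real.exp (-(specLam θ2 Γ p.1 p.2 * Δn n))) ^ q * x0 p.1 p.2 ^ 2 := by
    intro p
    have hexp1 : Real.exp (-(specLam θ2 Γ p.1 p.2 * Δn n)) ≤ 1 := by
      calc Real.exp (-(specLam θ2 Γ p.1 p.2 * Δn n)) ≤ Real.exp 0 :=
            Real.exp_le_exp.mpr (by nlinarith [hLpos p.1 p.2, hΔpos])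
        _ = 1 := Real.exp_zero
    exact mul_nonneg (Real.rpow_nonneg (by linarith) q) (sq_nonneg _)
  have hdom : Summable (fun p : ℕ+ × ℕ+ =>
      (K * Δn n ^ s) * (specLam θ2 Γ p.1 p.2 ^ (1 + α0) * x0 p.1 p.2 ^ 2)) :=
    hsum.mul_left _
  have hg : Summable (fun p : ℕ+ × ℕ+ =>
      (1 - Real.exp (-(specLam θ2 Γ p.1 p.2 * Δn n))) ^ q * x0 p.1 p.2 ^ 2) :=
    Summable.of_nonneg_of_le hgnonneg (fun p => key p.1 p.2) hdom
  have hrw : (∑' (l1 : ℕ+) (l2 : ℕ+),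
        (1 - Real.exp (-(specLam θ2 Γ l1 l2 * Δn n))) ^ q * x0 l1 l2 ^ 2) =
      ∑' p : ℕ+ × ℕ+,
        (1 - Real.exp (-(specLam θ2 Γ p.1 p.2 * Δn n))) ^ q * x0 p.1 p.2 ^ 2 :=
    (Summable.tsum_prod' hg hg.prod_factor).symm
  have hstep : (∑' p : ℕ+ × ℕ+,
        (1 - Real.exp (-(specLam θ2 Γ p.1 p.2 * Δn n))) ^ q * x0 p.1 p.2 ^ 2) ≤
      (K * Δn n ^ s) * T := by
    calc (∑' p : ℕ+ × ℕ+,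
          (1 - Real.exp (-(specLam θ2 Γ p.1 p.2 * Δn n))) ^ q * x0 p.1 p.2 ^ 2)
        ≤ ∑' p : ℕ+ × ℕ+,
            (K * Δn n ^ s) * (specLam θ2 Γ p.1 p.2 ^ (1 + α0) * x0 p.1 p.2 ^ 2) :=
          Summable.tsum_le_tsum (fun p => key p.1 p.2) hg hdom
      _ = (K * Δn n ^ s) * T := by rw [hTdef]; exact tsum_mul_left
  -- Δn n ^ s ≤ c2 ^ s * n ^ (-s)
  have hΔs : Δn n ^ s ≤ c2 ^ s * (n : ℝ) ^ (-s) := by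
    have h1 : Δn n ^ s ≤ (c2 / n) ^ s := Real.rpow_le_rpow hΔpos.le hΔ2 hs0
    have h2 : ((c2 : ℝ) / n) ^ s = c2 ^ s * (n : ℝ) ^ (-s) := by
      rw [Real.div_rpow (by linarith) hn0.le, Real.rpow_neg hn0.le, div_eq_mul_inv]
    linarith [h1, h2.le, h2.ge]
  have hns : (n : ℝ) ^ (-s) ≤ (if α0 < q then (n : ℝ) ^ (-α0)
      else if α0 = q then (n : ℝ) ^ (-α0) * Real.log n
      else (n : ℝ) ^ (-q)) := by
    split_ifs with h1 h2
    · rw [hsdef, min_eq_left h1.le]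
    · have hs' : s = α0 := by rw [hsdef, h2, min_self]
      rw [hs']
      have hlog : 1 ≤ Real.log n := by
        rw [Real.le_log_iff_exp_le hn0]
        calc Real.exp 1 ≤ 3 := by
              linarith [Real.exp_one_lt_d9.le]
          _ ≤ (n : ℝ) := hn3
      nlinarith [Real.rpow_nonneg hn0.le (-α0)]
    · have hqα : q < α0 := by
        rcases lt_trichotomy α0 q with h | h | h
        · exact absurd h h1
        · exact absurd h h2
        · exact h
      rw [hsdef, min_eq_right hqα.le]
  have hC1 : c2 ^ s * (K * T) ≤ max 1 (c2 ^ s * (K * T)) := le_max_right _ _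
  have hc2s : 0 ≤ c2 ^ s := Real.rpow_nonneg (by linarith) s
  have htpos : 0 ≤ (if α0 < q then (n : ℝ) ^ (-α0)
      else if α0 = q then (n : ℝ) ^ (-α0) * Real.log n
      else (n : ℝ) ^ (-q)) := by
    refine le_trans (Real.rpow_nonneg hn0.le (-s)) hns
  calc (∑' (l1 : ℕ+) (l2 : ℕ+),
        (1 - Real.exp (-(specLam θ2 Γ l1 l2 * Δn n))) ^ q * x0 l1 l2 ^ 2)
      = ∑' p : ℕ+ × ℕ+,
          (1 - Real.exp (-(specLam θ2 Γ p.1 p.2 * Δn n))) ^ q * x0 p.1 p.2 ^ 2 := hrw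
    _ ≤ (K * Δn n ^ s) * T := hstep
    _ ≤ (K * (c2 ^ s * (n : ℝ) ^ (-s))) * T := by
        have := mul_le_mul_of_nonneg_left hΔs hK0
        nlinarith
    _ = (c2 ^ s * (K * T)) * (n : ℝ) ^ (-s) := by ring
    _ ≤ max 1 (c2 ^ s * (K * T)) * (n : ℝ) ^ (-s) :=
        mul_le_mul_of_nonneg_right hC1 (Real.rpow_nonneg hn0.le _)
    _ ≤ max 1 (c2 ^ s * (K * T)) * (if α0 < q then (n : ℝ) ^ (-α0)
          else if α0 = q then (n : ℝ) ^ (-α0) * Real.log n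
          else (n : ℝ) ^ (-q)) :=
        mul_le_mul_of_nonneg_left hns (le_trans zero_le_one (le_max_left _ _))
end
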